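/- Under the substitution u_i ↦ e_i(α, α, α) and v_i ↦ e_i(2α, 2α, β) (elementary symmetric polynomials), the polynomial [F] = 2(v1 - 2u1)(6u1^2 - 4u1v1 - 6u2 + 3v2) maps to 0, while [F*] = 2(v1 - 2u1)(5u1^2 - 8u1v1 + 9u2 - 3v2 + 3v1^2) maps to -6(2α - β)(4α^2 - 4αβ + β^2), which is a nonzero polynomial in ℤ[α, β]. -/

import Mathlib

open MvPolynomial

/-- Restricting the equivariant classes `[F]` and `[F*]` to the stabilizer torus of a
point of the orbit `(1⁴)` (substitution `uᵢ ↦ eᵢ(α,α,α)`, `vᵢ ↦ eᵢ(2α,2α,β)`): the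
class `[F]` restricts to `0` while `[F*]` restricts to the nonzero polynomial
`-6(2α - β)(4α² - 4αβ + β²)` in `ℤ[α, β]`. -/
theorem stmt_17 (α β u1 u2 v1 v2 : MvPolynomial (Fin 2) ℤ)
    (hα : α = X 0) (hβ : β = X 1)
    (hu1 : u1 = α + α + α) (hu2 : u2 = α * α + α * α + α * α)
    (hv1 : v1 = 2 * α + 2 * α + β)
    (hv2 : v2 = (2 * α) * (2 * α) + (2 * α) * β + (2 * α) * β) :
    2 * (v1 - 2 * u1) * (6 * u1 ^ 2 - 4 * u1 * v1 - 6 * u2 + 3 * v2) = 0 ∧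
    2 * (v1 - 2 * u1) * (5 * u1 ^ 2 - 8 * u1 * v1 + 9 * u2 - 3 * v2 + 3 * v1 ^ 2) =
      -6 * (2 * α - β) * (4 * α ^ 2 - 4 * α * β + β ^ 2) ∧
    -6 * (2 * α - β) * (4 * α ^ 2 - 4 * α * β + β ^ 2) ≠ 0 := by
  subst hu1 hu2 hv1 hv2
  refine ⟨by ring, by ring, fun h => ?_⟩
  -- at α = 1, β = 0 the polynomial takes the value -48
  have h₀ := congrArg (eval ![1, 0]) h
  subst hα hβ
  simp at h₀
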